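/- There do not exist smooth functions A₁, A₂, A₃ on ℝ³ such that, modulo the ideal I generated by σ₃² − σ₁σ₂ in C^∞(ℝ³), the four equations hold: −σ₃ ≡ 2σ₁A₁ + σ₃A₃, σ₁ ≡ 2σ₃A₁ + σ₂A₃, −σ₂ ≡ 2σ₃A₂ + σ₁A₃, −σ₃ ≡ 2σ₂A₂ + σ₃A₃ (all mod I). -/
import Mathlib

/-- There are no smooth A₁, A₂, A₃ on ℝ³ satisfying, modulo the ideal
I generated by p = σ₃² - σ₁σ₂ in C^∞(ℝ³): -σ₃ ≡ 2σ₁A₁ + σ₃A₃, σ₁ ≡ 2σ₃A₁ + σ₂A₃,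
-σ₂ ≡ 2σ₃A₂ + σ₁A₃, -σ₃ ≡ 2σ₂A₂ + σ₃A₃. -/
theorem stmt19 :
    ¬ ∃ A₁ A₂ A₃ : ℝ × ℝ × ℝ → ℝ,
      ContDiff ℝ (⊤ : ℕ∞) A₁ ∧ ContDiff ℝ (⊤ : ℕ∞) A₂ ∧ ContDiff ℝ (⊤ : ℕ∞) A₃ ∧
      (∃ q : ℝ × ℝ × ℝ → ℝ, ContDiff ℝ (⊤ : ℕ∞) q ∧ ∀ s : ℝ × ℝ × ℝ,
        -s.2.2 - (2 * s.1 * A₁ s + s.2.2 * A₃ s) = q s * (s.2.2 ^ 2 - s.1 * s.2.1)) ∧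
      (∃ q : ℝ × ℝ × ℝ → ℝ, ContDiff ℝ (⊤ : ℕ∞) q ∧ ∀ s : ℝ × ℝ × ℝ,
        s.1 - (2 * s.2.2 * A₁ s + s.2.1 * A₃ s) = q s * (s.2.2 ^ 2 - s.1 * s.2.1)) ∧
      (∃ q : ℝ × ℝ × ℝ → ℝ, ContDiff ℝ (⊤ : ℕ∞) q ∧ ∀ s : ℝ × ℝ × ℝ,
        -s.2.1 - (2 * s.2.2 * A₂ s + s.1 * A₃ s) = q s * (s.2.2 ^ 2 - s.1 * s.2.1)) ∧
      (∃ q : ℝ × ℝ × ℝ → ℝ, ContDiff ℝ (⊤ : ℕ∞) q ∧ ∀ s : ℝ × ℝ × ℝ,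
        -s.2.2 - (2 * s.2.1 * A₂ s + s.2.2 * A₃ s) = q s * (s.2.2 ^ 2 - s.1 * s.2.1)) := by
  rintro ⟨A₁, A₂, A₃, -, -, -, -, ⟨q, -, hq⟩, -, -⟩
  have := hq (1, 0, 0)
  simp at this
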